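/- arXiv:2103.07749 — 4 statements merged into one kernel-verified Lean document; each statement's English description precedes it below -/
import Mathlib

section
/- Sphere-packing bound for the overweight distance: Let R be a finite ring with identity and let C ⊆ R^n be a (not necessarily linear) nonempty code of length n whose minimum overweight distance d = min{ D(x,y) : x,y ∈ C, x ≠ y } satisfies d = 2e + 1 for a nonnegative integer e. Then |C| ≤ |R|^n / |B_{e,D}(0)|, where B_{e,D}(0) is the overweight ball of radius e around 0 in R^n. -/
/-!
The overweight satisfies `W(x + y) ≤ 2 ≤ W x + W y` for nonzero `x, y`, so `D` is a
translation-invariant metric. Hence the `D`-balls of radius `e` around distinct codewords are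
disjoint (their centres are at distance at least `2e + 1`) and all have the size of `B_{e,D}(0)`;
counting their union inside `R^n` gives `|C| · |B_{e,D}(0)| ≤ |R|^n`.
-/

open Classical in
noncomputable def overweight {R : Type*} [Ring R] (x : R) : ℝ :=
  if x = 0 then 0 else if IsUnit x then 1 else 2

noncomputable def overweightN {R : Type*} [Ring R] {n : ℕ} (x : Fin n → R) : ℝ :=
  ∑ i, overweight (x i)

noncomputable def owDist {R : Type*} [Ring R] {n : ℕ} (x y : Fin n → R) : ℝ :=
  overweightN (x - y)

def owBall {R : Type*} [Ring R] {n : ℕ} (r : ℝ) (x : Fin n → R) : Set (Fin n → R) :=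
  {y : Fin n → R | owDist x y ≤ r}

theorem Set.ncard_mul_le_card_of_pairwiseDisjoint {ι α : Type*} [Fintype α] {C : Set ι}
    (hC : C.Finite) {B : ι → Set α} {k : ℕ} (hk : ∀ c ∈ C, (B c).ncard = k)
    (hB : C.PairwiseDisjoint B) : C.ncard * k ≤ Fintype.card α := by
  classical
  lift C to Finset ι using hC
  calc (C : Set ι).ncard * k = ∑ c ∈ C, (B c).toFinset.card := by
        rw [Set.ncard_coe_finset, Finset.sum_const_nat fun c hc => by
          rw [← Set.ncard_eq_toFinset_card', hk c hc]]
    _ = (C.biUnion fun c => (B c).toFinset).card :=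
        (Finset.card_biUnion fun _ hc _ hc' hne => Set.disjoint_toFinset.2 (hB hc hc' hne)).symm
    _ ≤ Fintype.card α := Finset.card_le_univ _

section Overweight

open scoped Pointwise

variable {R : Type*} [Ring R] {n : ℕ}

@[simp]
theorem overweight_zero : overweight (0 : R) = 0 := by
  simp [overweight]

@[simp]
theorem overweight_neg (x : R) : overweight (-x) = overweight x := by
  unfold overweight; split_ifs <;> simp_all

theorem one_le_overweight {x : R} (hx : x ≠ 0) : 1 ≤ overweight x := by
  rw [overweight, if_neg hx]; split_ifs <;> norm_num

theorem overweight_le_two (x : R) : overweight x ≤ 2 := by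
  unfold overweight; split_ifs <;> norm_num

theorem overweight_add_le (x y : R) : overweight (x + y) ≤ overweight x + overweight y := by
  rcases eq_or_ne x 0 with rfl | hx
  · simp
  rcases eq_or_ne y 0 with rfl | hy
  · simp
  linarith [overweight_le_two (x + y), one_le_overweight hx, one_le_overweight hy]

@[simp]
theorem overweightN_zero : overweightN (0 : Fin n → R) = 0 := by
  simp [overweightN]

@[simp]
theorem overweightN_neg (x : Fin n → R) : overweightN (-x) = overweightN x := by
  simp [overweightN]

theorem overweightN_add_le (x y : Fin n → R) :
    overweightN (x + y) ≤ overweightN x + overweightN y := by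
  rw [overweightN, overweightN, overweightN, ← Finset.sum_add_distrib]
  exact Finset.sum_le_sum fun i _ => overweight_add_le (x i) (y i)

theorem owDist_comm (x y : Fin n → R) : owDist x y = owDist y x := by
  rw [owDist, owDist, ← overweightN_neg, neg_sub]

theorem owDist_triangle (x y z : Fin n → R) : owDist x z ≤ owDist x y + owDist y z := by
  simpa [owDist] using overweightN_add_le (x - y) (y - z)

theorem mem_owBall_self {r : ℝ} (hr : 0 ≤ r) (x : Fin n → R) : x ∈ owBall r x := by
  simpa [owBall, owDist] using hr

theorem owBall_eq_vadd_owBall_zero (r : ℝ) (x : Fin n → R) :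
    owBall r x = x +ᵥ owBall r (0 : Fin n → R) := by
  ext y
  simp only [owBall, owDist, Set.mem_vadd_set_iff_neg_vadd_mem, Set.mem_ofPred_eq, vadd_eq_add,
    zero_sub, overweightN_neg, neg_add_eq_sub, ← neg_sub x y]

theorem ncard_owBall (r : ℝ) (x : Fin n → R) :
    (owBall r x).ncard = (owBall r (0 : Fin n → R)).ncard := by
  rw [owBall_eq_vadd_owBall_zero, Set.ncard_vadd_set]

theorem disjoint_owBall {r s : ℝ} {x y : Fin n → R} (h : r + s < owDist x y) :
    Disjoint (owBall r x) (owBall s y) :=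
  Set.disjoint_left.2 fun z hzx hzy => h.not_ge <|
    calc owDist x y ≤ owDist x z + owDist z y := owDist_triangle x z y
      _ = owDist x z + owDist y z := by rw [owDist_comm z y]
      _ ≤ r + s := add_le_add hzx hzy

end Overweight

theorem sphere_packing_overweight_general {R : Type*} [Ring R] [Fintype R] {n : ℕ}
    (C : Set (Fin n → R)) (e : ℕ) (d : ℝ) (hde : d = 2 * e + 1)
    (hmin : ∀ x ∈ C, ∀ y ∈ C, x ≠ y → d ≤ owDist x y) :
    (C.ncard : ℝ) ≤ (Fintype.card R : ℝ) ^ n /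
      ((owBall (e : ℝ) (0 : Fin n → R)).ncard : ℝ) := by
  have hdisj : C.PairwiseDisjoint (owBall (e : ℝ)) := fun x hx y hy hne =>
    disjoint_owBall (by linarith [hmin x hx y hy hne])
  have hcount := Set.ncard_mul_le_card_of_pairwiseDisjoint C.toFinite
    (fun c _ => ncard_owBall (e : ℝ) c) hdisj
  have hball : 0 < (owBall (e : ℝ) (0 : Fin n → R)).ncard :=
    (Set.ncard_pos (Set.toFinite _)).2 ⟨0, mem_owBall_self e.cast_nonneg 0⟩
  rw [Fintype.card_fun, Fintype.card_fin] at hcount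
  rw [le_div_iff₀ (by exact_mod_cast hball)]
  exact_mod_cast hcount

/-- Sphere-packing bound for the overweight distance: if a (not necessarily
linear) code `C ⊆ R^n` has minimum overweight distance `d = 2e + 1`, then
`|C| ≤ |R|^n / |B_{e,D}(0)|`. -/
theorem sphere_packing_overweight {R : Type*} [Ring R] [Fintype R] {n : ℕ}
    (C : Set (Fin n → R)) (e : ℕ) (d : ℝ) (hde : d = 2 * e + 1)
    (hmin : ∀ x ∈ C, ∀ y ∈ C, x ≠ y → d ≤ owDist x y)
    (hex : ∃ x ∈ C, ∃ y ∈ C, x ≠ y ∧ owDist x y = d) :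
    (C.ncard : ℝ) ≤ (Fintype.card R : ℝ) ^ n /
      ((owBall (e : ℝ) (0 : Fin n → R)).ncard : ℝ) :=
  sphere_packing_overweight_general C e d hde hmin
end

section
/- Let R be a finite local ring with maximal ideal J satisfying |J| ≥ 2, and set η = 2(1 - 1/|J|). Let P be a probability distribution on R. Then Σ_{x ∈ R} Σ_{y ∈ R} W(x - y) P(x) P(y) ≤ η, where W is the overweight on R. -/
/-!
Writing `T = ∑_{x - y ∈ J} P x P y` and `D = ∑ P x ²`, the overweight splits as
`W z = 1 + [z ∈ J] - 2 [z = 0]`, so the double sum is `1 + T - 2 D`. Every `x` has exactly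
`|J|` partners `y` with `x - y ∈ J`, so AM-GM gives `T ≤ |J| D`; together with `T ≤ 1` and
`|J| ≥ 2` this yields `1 + T - 2 D ≤ 1 + (1 - 2 / |J|) T ≤ 2 (1 - 1 / |J|)`.
-/

open Finset

section Relation

variable {α : Type*} [Fintype α] (r : α → α → Prop) [DecidableRel r]

theorem sum_sum_ite_eq_card_mul_sum {m : ℕ} (hdeg : ∀ x, #{y | r x y} = m) (f : α → ℝ) :
    ∑ x, ∑ y, (if r x y then f x else 0) = m * ∑ x, f x := by
  simp only [← sum_filter, sum_const, nsmul_eq_mul, hdeg, mul_sum]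

theorem sum_sum_ite_mul_le_card_mul_sum_sq (hr : ∀ x y, r x y → r y x) {m : ℕ}
    (hdeg : ∀ x, #{y | r x y} = m) (P : α → ℝ) :
    ∑ x, ∑ y, (if r x y then P x * P y else 0) ≤ m * ∑ x, P x ^ 2 := by
  have hswap : ∑ x, ∑ y, (if r x y then P y ^ 2 else 0)
      = ∑ x, ∑ y, (if r x y then P x ^ 2 else 0) := by
    rw [sum_comm]
    exact sum_congr rfl fun x _ => sum_congr rfl fun y _ => if_congr ⟨hr y x, hr x y⟩ rfl rfl
  calc ∑ x, ∑ y, (if r x y then P x * P y else 0)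
      ≤ ∑ x, ∑ y, ((if r x y then P x ^ 2 else 0) + (if r x y then P y ^ 2 else 0)) / 2 := by
        gcongr with x _ y _
        split_ifs
        · nlinarith [sq_nonneg (P x - P y)]
        · norm_num
    _ = m * ∑ x, P x ^ 2 := by
        simp only [← sum_div, sum_add_distrib, hswap, sum_sum_ite_eq_card_mul_sum r hdeg]
        ring

theorem sum_sum_ite_mul_le_sq_sum {P : α → ℝ} (hP : ∀ x, 0 ≤ P x) :
    ∑ x, ∑ y, (if r x y then P x * P y else 0) ≤ (∑ x, P x) ^ 2 := by
  rw [sq, sum_mul_sum]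
  gcongr with x _ y _
  split_ifs
  exacts [le_rfl, mul_nonneg (hP x) (hP y)]

end Relation

section Overweight

open scoped Classical

variable {R : Type*} [Ring R]

theorem overweight_eq [Nontrivial R] (z : R) :
    overweight z = 1 + (if IsUnit z then 0 else 1) - 2 * (if z = 0 then 1 else 0) := by
  unfold overweight
  by_cases hz : z = 0
  · norm_num [hz]
  · split_ifs <;> norm_num

theorem card_filter_not_isUnit_sub [Fintype R] (x : R) :
    #{y | ¬IsUnit (x - y)} = (nonunits R).ncard := by
  have himage : ({y | ¬IsUnit (x - y)} : Finset R) = (nonunits R).toFinset.image (x - ·) := by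
    ext y
    simp only [mem_filter, mem_univ, true_and, mem_image, Set.mem_toFinset, mem_nonunits_iff]
    exact ⟨fun h => ⟨x - y, h, sub_sub_cancel x y⟩, by rintro ⟨z, hz, rfl⟩; simpa using hz⟩
  rw [himage, card_image_of_injective _ sub_right_injective, Set.ncard_eq_toFinset_card']

theorem sum_sum_overweight_mul [Nontrivial R] [Fintype R] (P : R → ℝ) :
    ∑ x, ∑ y, overweight (x - y) * P x * P y
      = (∑ x, P x) ^ 2 + ∑ x, ∑ y, (if ¬IsUnit (x - y) then P x * P y else 0)
        - 2 * ∑ x, P x ^ 2 := by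
  have hpoint : ∀ x y : R, overweight (x - y) * P x * P y
      = P x * P y + (if ¬IsUnit (x - y) then P x * P y else 0)
        - 2 * (if x = y then P x * P y else 0) := by
    intro x y
    rw [overweight_eq, sub_eq_zero]
    split_ifs <;> ring
  simp only [hpoint, sum_sub_distrib, sum_add_distrib, ← mul_sum, sum_ite_eq, mem_univ,
    if_true, sq, sum_mul_sum]

end Overweight

theorem overweight_prob_bound_general {R : Type*} [Ring R] [Fintype R]
    (hJ : 2 ≤ (nonunits R).ncard) (η : ℝ)
    (hη : η = 2 * (1 - 1 / ((nonunits R).ncard : ℝ)))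
    (P : R → ℝ) (hP0 : ∀ x : R, 0 ≤ P x) (hP1 : ∑ x : R, P x = 1) :
    ∑ x : R, ∑ y : R, overweight (x - y) * P x * P y ≤ η := by
  obtain ⟨a, ha⟩ : (nonunits R).Nonempty := Set.nonempty_of_ncard_ne_zero (by omega)
  have : Nontrivial R := not_subsingleton_iff_nontrivial.mp fun _ => ha (isUnit_of_subsingleton a)
  classical
  have hm : (2 : ℝ) ≤ (nonunits R).ncard := by exact_mod_cast hJ
  set m : ℝ := ((nonunits R).ncard : ℝ)
  have hsymm : ∀ x y : R, ¬IsUnit (x - y) → ¬IsUnit (y - x) := fun x y h hu =>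
    h (by rw [← neg_sub]; exact hu.neg)
  set T := ∑ x, ∑ y, (if ¬IsUnit (x - y) then P x * P y else 0)
  have hTD : T ≤ m * ∑ x, P x ^ 2 :=
    sum_sum_ite_mul_le_card_mul_sum_sq _ hsymm card_filter_not_isUnit_sub P
  have hT1 : T ≤ 1 := by
    simpa only [hP1, one_pow] using sum_sum_ite_mul_le_sq_sum (fun x y : R => ¬IsUnit (x - y)) hP0
  rw [sum_sum_overweight_mul, hP1, hη]
  have hTD' : T / m ≤ ∑ x, P x ^ 2 := (div_le_iff₀' (by linarith)).mpr hTD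
  have hcoeff : 0 ≤ 1 - 2 / m := by rw [sub_nonneg, div_le_one₀ (by linarith)]; exact hm
  calc 1 ^ 2 + T - 2 * ∑ x, P x ^ 2 ≤ 1 + (1 - 2 / m) * T := by
        have : (1 - 2 / m) * T = T - 2 * (T / m) := by ring
        linarith
    _ ≤ 1 + (1 - 2 / m) * 1 := by gcongr
    _ = 2 * (1 - 1 / m) := by ring

/-- Let `R` be a finite local ring whose maximal ideal `J = nonunits R` has at
least two elements, and set `η = 2(1 - 1/|J|)`. For every probability
distribution `P` on `R` we have `∑_{x ∈ R} ∑_{y ∈ R} W(x-y) P(x) P(y) ≤ η`. -/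
theorem overweight_prob_bound {R : Type*} [Ring R] [Fintype R] [IsLocalRing R]
    (hJ : 2 ≤ (nonunits R).ncard) (η : ℝ)
    (hη : η = 2 * (1 - 1 / ((nonunits R).ncard : ℝ)))
    (P : R → ℝ) (hP0 : ∀ x : R, 0 ≤ P x) (hP1 : ∑ x : R, P x = 1) :
    ∑ x : R, ∑ y : R, overweight (x - y) * P x * P y ≤ η :=
  overweight_prob_bound_general hJ η hη P hP0 hP1
end

section
/- Let R be a finite local ring with maximal ideal J satisfying |J| ≥ 2, set η = 2(1 - 1/|J|), and let C ⊆ R^n be a (not necessarily linear) code of minimum overweight distance d. Then |C|(|C| - 1) d ≤ Σ_{x ∈ C} Σ_{y ∈ C} D(x,y) ≤ |C|^2 n η, where D denotes the overweight distance on R^n. -/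
/-!
For the lower bound, the diagonal terms vanish and each of the `|C|(|C| - 1)` off-diagonal terms
is at least `d`.

For the upper bound, sum coordinatewise. In one coordinate, let `c a` be the number of codewords
with value `a` there. Since `W u = 1 + [u ∈ J] - 2 [u = 0]`, the double sum of that coordinate is
`|C|² + N - 2E`, where `N` counts the pairs whose difference lies in `J` and `E = ∑ₐ (c a)²`
the pairs that agree. The pairs with difference `j` number `∑ₐ c a * c (a - j) ≤ E`, so
`N ≤ |J| E`; together with `N ≤ |C|²` and `|J| ≥ 2` this gives `|C|² + N - 2E ≤ |C|² η`.
-/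

open Finset

theorem card_mul_card_sub_one_mul_le_sum_sum {α : Type*} (C : Finset α) (D : α → α → ℝ) (d : ℝ)
    (hdiag : ∀ x ∈ C, 0 ≤ D x x) (hmin : ∀ x ∈ C, ∀ y ∈ C, x ≠ y → d ≤ D x y) :
    #C * (#C - 1) * d ≤ ∑ x ∈ C, ∑ y ∈ C, D x y := by
  classical
  have hrow : ∀ x ∈ C, (#C - 1) * d ≤ ∑ y ∈ C, D x y := fun x hx =>
    calc (#C - 1) * d = #(C.erase x) * d := by
          rw [card_erase_of_mem hx, Nat.cast_pred (card_pos.2 ⟨x, hx⟩)]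
      _ ≤ ∑ y ∈ C.erase x, D x y := by
          rw [← nsmul_eq_mul]
          exact card_nsmul_le_sum _ _ _ fun y hy =>
            hmin x hx y (mem_of_mem_erase hy) (ne_of_mem_erase hy).symm
      _ ≤ ∑ y ∈ C, D x y := by
          rw [← sum_erase_add C _ hx]
          linarith [hdiag x hx]
  calc #C * (#C - 1) * d = #C • ((#C - 1) * d) := by rw [nsmul_eq_mul, mul_assoc]
    _ ≤ ∑ x ∈ C, ∑ y ∈ C, D x y := card_nsmul_le_sum _ _ _ hrow

section PairCounts

variable {G α : Type*} [AddCommGroup G] [Fintype G]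

theorem sum_mul_comp_sub_le_sum_sq (c : G → ℕ) (j : G) :
    ∑ a, c a * c (a - j) ≤ ∑ a, c a ^ 2 := by
  have hshift : ∑ a, c (a - j) ^ 2 = ∑ a, c a ^ 2 :=
    Equiv.sum_comp (Equiv.subRight j) (fun a => c a ^ 2)
  have hAMGM : ∑ a, 2 * c a * c (a - j) ≤ ∑ a, (c a ^ 2 + c (a - j) ^ 2) :=
    sum_le_sum fun a _ => two_mul_le_add_sq _ _
  simp only [mul_assoc, ← mul_sum, sum_add_distrib, hshift] at hAMGM
  omega

variable [DecidableEq G]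

theorem card_filter_sub_eq_sum_mul (C : Finset α) (f : α → G) (j : G) :
    #{p ∈ C ×ˢ C | f p.1 - f p.2 = j} = ∑ a, #{x ∈ C | f x = a} * #{y ∈ C | f y = a - j} := by
  rw [card_eq_sum_card_fiberwise (f := fun p => f p.1) (t := univ) fun _ _ => mem_univ _]
  refine sum_congr rfl fun a _ => ?_
  rw [← card_product, filter_filter]
  congr 1
  ext ⟨x, y⟩
  simp only [mem_filter, mem_product]
  constructor
  · rintro ⟨⟨hx, hy⟩, hxy, rfl⟩
    exact ⟨⟨hx, rfl⟩, hy, by rw [← hxy, sub_sub_cancel]⟩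
  · rintro ⟨⟨hx, rfl⟩, hy, hfy⟩
    exact ⟨⟨hx, hy⟩, by rw [hfy, sub_sub_cancel], rfl⟩

theorem card_filter_sub_eq_le (C : Finset α) (f : α → G) (j : G) :
    #{p ∈ C ×ˢ C | f p.1 - f p.2 = j} ≤ #{p ∈ C ×ˢ C | f p.1 = f p.2} := by
  have hdiag := card_filter_sub_eq_sum_mul C f 0
  simp only [sub_eq_zero, sub_zero, ← sq] at hdiag
  rw [card_filter_sub_eq_sum_mul, hdiag]
  exact sum_mul_comp_sub_le_sum_sq _ j

theorem card_filter_sub_mem_le (C : Finset α) (f : α → G) (S : Finset G) :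
    #{p ∈ C ×ˢ C | f p.1 - f p.2 ∈ S} ≤ #{p ∈ C ×ˢ C | f p.1 = f p.2} * #S :=
  card_le_mul_card_image_of_maps_to (f := fun p : α × α => f p.1 - f p.2)
    (fun _ hp => (mem_filter.1 hp).2) _ fun j _ =>
      (card_le_card (filter_subset_filter _ (filter_subset _ _))).trans
        (card_filter_sub_eq_le C f j)

end PairCounts

section Overweight

variable {R α : Type*} [Ring R]

theorem nontrivial_of_two_le_ncard_nonunits (hJ : 2 ≤ (nonunits R).ncard) : Nontrivial R := by
  obtain ⟨u, hu⟩ := Set.nonempty_of_ncard_ne_zero (s := nonunits R) (by omega)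
  rw [← not_subsingleton_iff_nontrivial]
  intro
  exact hu (isUnit_of_subsingleton u)

open Classical in
theorem overweight_eq_ite [Nontrivial R] (u : R) :
    overweight u = 1 + (if u ∈ nonunits R then 1 else 0) - 2 * (if u = 0 then 1 else 0) := by
  by_cases h0 : u = 0
  · norm_num [overweight, h0]
  · by_cases hu : IsUnit u <;> norm_num [overweight, h0, hu]

open Classical in
theorem sum_sum_overweight_sub_eq [Fintype R] [Nontrivial R] (C : Finset α) (f : α → R) :
    ∑ x ∈ C, ∑ y ∈ C, overweight (f x - f y) =
      #C ^ 2 + #{p ∈ C ×ˢ C | f p.1 - f p.2 ∈ (nonunits R).toFinset}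
        - 2 * #{p ∈ C ×ˢ C | f p.1 = f p.2} := by
  rw [← sum_product' C C fun x y => overweight (f x - f y)]
  simp only [overweight_eq_ite, sum_add_distrib, sum_sub_distrib, ← mul_sum, sum_boole,
    sum_const, card_product, sub_eq_zero, Set.mem_toFinset]
  ring

theorem sum_sum_overweight_sub_le [Fintype R] (hJ : 2 ≤ (nonunits R).ncard)
    (C : Finset α) (f : α → R) :
    ∑ x ∈ C, ∑ y ∈ C, overweight (f x - f y) ≤
      #C ^ 2 * (2 * (1 - 1 / ((nonunits R).ncard : ℝ))) := by
  classical
  have := nontrivial_of_two_le_ncard_nonunits hJ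
  rw [sum_sum_overweight_sub_eq]
  set N := #{p ∈ C ×ˢ C | f p.1 - f p.2 ∈ (nonunits R).toFinset}
  set E := #{p ∈ C ×ˢ C | f p.1 = f p.2}
  have hNE : (N : ℝ) ≤ E * (nonunits R).ncard := by
    rw [Set.ncard_eq_toFinset_card']
    exact_mod_cast card_filter_sub_mem_le C f _
  have hN : (N : ℝ) ≤ #C ^ 2 := by
    rw [sq, ← Nat.cast_mul, ← card_product]
    exact_mod_cast card_filter_le _ _
  have hq : (2 : ℝ) ≤ (nonunits R).ncard := by exact_mod_cast hJ
  rw [← sub_nonneg]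
  have hgap : #C ^ 2 * (2 * (1 - 1 / ((nonunits R).ncard : ℝ))) - (#C ^ 2 + N - 2 * E)
      = ((#C ^ 2 - N) * ((nonunits R).ncard - 2) + 2 * (E * (nonunits R).ncard - N))
        / (nonunits R).ncard := by
    field_simp
    ring
  rw [hgap]
  apply div_nonneg _ (by linarith)
  nlinarith

theorem owDist_self {n : ℕ} (x : Fin n → R) : owDist x x = 0 := by
  simp [owDist, overweightN, overweight]

theorem sum_sum_owDist_eq {n : ℕ} (C : Finset (Fin n → R)) :
    ∑ x ∈ C, ∑ y ∈ C, owDist x y = ∑ i, ∑ x ∈ C, ∑ y ∈ C, overweight (x i - y i) := by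
  simp only [owDist, overweightN, Pi.sub_apply]
  exact (sum_congr rfl fun x _ => sum_comm).trans sum_comm

end Overweight

theorem overweight_double_sum_bound_general {R : Type*} [Ring R] [Fintype R]
    {n : ℕ} (hJ : 2 ≤ (nonunits R).ncard) (η : ℝ)
    (hη : η = 2 * (1 - 1 / ((nonunits R).ncard : ℝ)))
    (C : Finset (Fin n → R)) (d : ℝ)
    (hmin : ∀ x ∈ C, ∀ y ∈ C, x ≠ y → d ≤ owDist x y) :
    (C.card : ℝ) * ((C.card : ℝ) - 1) * d ≤ ∑ x ∈ C, ∑ y ∈ C, owDist x y ∧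
    ∑ x ∈ C, ∑ y ∈ C, owDist x y ≤ (C.card : ℝ) ^ 2 * n * η := by
  refine ⟨card_mul_card_sub_one_mul_le_sum_sum C owDist d
    (fun x _ => (owDist_self x).ge) hmin, ?_⟩
  calc ∑ x ∈ C, ∑ y ∈ C, owDist x y
      = ∑ i, ∑ x ∈ C, ∑ y ∈ C, overweight (x i - y i) := sum_sum_owDist_eq C
    _ ≤ ∑ _i : Fin n, (C.card : ℝ) ^ 2 * η :=
        sum_le_sum fun i _ => hη ▸ sum_sum_overweight_sub_le hJ C (· i)
    _ = (C.card : ℝ) ^ 2 * n * η := by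
        rw [sum_const, card_univ, Fintype.card_fin, nsmul_eq_mul]
        ring

/-- Let `R` be a finite local ring whose maximal ideal `J = nonunits R` has at
least two elements, and set `η = 2(1 - 1/|J|)`. For a code `C ⊆ R^n` of minimum
overweight distance `d` we have
`|C|(|C|-1) d ≤ ∑_{x ∈ C} ∑_{y ∈ C} D(x,y) ≤ |C|^2 n η`. -/
theorem overweight_double_sum_bound {R : Type*} [Ring R] [Fintype R]
    [IsLocalRing R] {n : ℕ} (hJ : 2 ≤ (nonunits R).ncard) (η : ℝ)
    (hη : η = 2 * (1 - 1 / ((nonunits R).ncard : ℝ)))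
    (C : Finset (Fin n → R)) (d : ℝ)
    (hmin : ∀ x ∈ C, ∀ y ∈ C, x ≠ y → d ≤ owDist x y)
    (hex : ∃ x ∈ C, ∃ y ∈ C, x ≠ y ∧ owDist x y = d) :
    (C.card : ℝ) * ((C.card : ℝ) - 1) * d ≤ ∑ x ∈ C, ∑ y ∈ C, owDist x y ∧
    ∑ x ∈ C, ∑ y ∈ C, owDist x y ≤ (C.card : ℝ) ^ 2 * n * η :=
  overweight_double_sum_bound_general hJ η hη C d hmin
end

section
/- Johnson bound (key estimate): Let n be a positive integer, γ > 0, d > 0 real numbers, and let e, N be real numbers with 0 ≤ e. Suppose N(N-1)·(d/2) ≤ N²·e - N²·e²/(2γn), so that N·(dγn - 2eγn + e²) ≤ dγn. If either (i) γn(d - γn) ≥ 1, or (ii) e/n ≤ γ - √((γ - d/n)·γ + 1/n²) (the expression under the square root being nonnegative), then N ≤ dγn. -/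
/-!
Write `x = γn`. The identity `dx - 2ex + e² = (x - e)² - x(x - d)` shows that either hypothesis
makes the coefficient of `N` in `N(dx - 2ex + e²) ≤ dx` at least `1`: under (i) because
`-x(x - d) ≥ 1`, under (ii) because, after multiplying by `n`, it says
`√(x(x - d) + 1) ≤ x - e`. A coefficient `≥ 1` against a nonnegative right-hand side gives `N ≤ dx`.
-/

lemma johnson_coeff_eq {R : Type*} [CommRing R] (x d e : R) :
    d * x - 2 * e * x + e ^ 2 = (x - e) ^ 2 - x * (x - d) := by
  ring

lemma one_le_sq_sub_mul_of_one_le_mul {x d e : ℝ} (h : 1 ≤ x * (d - x)) :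
    1 ≤ (x - e) ^ 2 - x * (x - d) := by
  nlinarith [sq_nonneg (x - e)]

lemma one_le_sq_sub_mul_of_sqrt_le {x d e : ℝ} (h : √(x * (x - d) + 1) ≤ x - e) :
    1 ≤ (x - e) ^ 2 - x * (x - d) := by
  linarith [(Real.sqrt_le_iff.mp h).2]

lemma mul_sqrt_johnson_radicand {n : ℝ} (hn : 0 < n) (γ d : ℝ) :
    n * √((γ - d / n) * γ + 1 / n ^ 2) = √(γ * n * (γ * n - d) + 1) := by
  have hscale : γ * n * (γ * n - d) + 1 = n ^ 2 * ((γ - d / n) * γ + 1 / n ^ 2) := by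
    field_simp
  rw [hscale, Real.sqrt_mul (sq_nonneg n), Real.sqrt_sq hn.le]

lemma sqrt_le_of_div_le_sub_sqrt {n : ℝ} (hn : 0 < n) {γ d e : ℝ}
    (h : e / n ≤ γ - √((γ - d / n) * γ + 1 / n ^ 2)) :
    √(γ * n * (γ * n - d) + 1) ≤ γ * n - e := by
  have hmul := (div_le_iff₀ hn).mp h
  rw [← mul_sqrt_johnson_radicand hn]
  linarith

theorem johnson_key_estimate_general (n : ℕ) (hn : 0 < n) (γ d e N : ℝ)
    (hγ : 0 < γ) (hd : 0 < d)
    (h2 : N * (d * γ * n - 2 * e * γ * n + e ^ 2) ≤ d * γ * n)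
    (hcond : γ * n * (d - γ * n) ≥ 1 ∨
      (0 ≤ (γ - d / n) * γ + 1 / (n : ℝ) ^ 2 ∧
        e / n ≤ γ - Real.sqrt ((γ - d / n) * γ + 1 / (n : ℝ) ^ 2))) :
    N ≤ d * γ * n := by
  have hn' : (0 : ℝ) < n := Nat.cast_pos.mpr hn
  have hcoeff : 1 ≤ (γ * n - e) ^ 2 - γ * n * (γ * n - d) := by
    rcases hcond with hi | ⟨-, hii⟩
    · exact one_le_sq_sub_mul_of_one_le_mul hi
    · exact one_le_sq_sub_mul_of_sqrt_le (sqrt_le_of_div_le_sub_sqrt hn' hii)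
  refine le_of_mul_le_of_one_le h2 (by positivity) ?_
  calc (1 : ℝ) ≤ (γ * n - e) ^ 2 - γ * n * (γ * n - d) := hcoeff
    _ = d * (γ * n) - 2 * e * (γ * n) + e ^ 2 := (johnson_coeff_eq _ _ _).symm
    _ = d * γ * n - 2 * e * γ * n + e ^ 2 := by ring

/-- Arithmetic core of the Johnson bound: if
`N(N-1)(d/2) ≤ N²e - N²e²/(2γn)`, so that `N(dγn - 2eγn + e²) ≤ dγn`, and if
either `γn(d - γn) ≥ 1` or `e/n ≤ γ - √((γ - d/n)γ + 1/n²)` (with a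
nonnegative radicand), then `N ≤ dγn`. -/
theorem johnson_key_estimate (n : ℕ) (hn : 0 < n) (γ d e N : ℝ)
    (hγ : 0 < γ) (hd : 0 < d) (he : 0 ≤ e)
    (h1 : N * (N - 1) * (d / 2) ≤ N ^ 2 * e - N ^ 2 * e ^ 2 / (2 * γ * n))
    (h2 : N * (d * γ * n - 2 * e * γ * n + e ^ 2) ≤ d * γ * n)
    (hcond : γ * n * (d - γ * n) ≥ 1 ∨
      (0 ≤ (γ - d / n) * γ + 1 / (n : ℝ) ^ 2 ∧
        e / n ≤ γ - Real.sqrt ((γ - d / n) * γ + 1 / (n : ℝ) ^ 2))) :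
    N ≤ d * γ * n :=
  johnson_key_estimate_general n hn γ d e N hγ hd h2 hcond
end
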